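/- Every bounded, T_Δ-closed subset A of a CAT(0) space X is compact with respect to the weak topology T_Δ. -/

import Mathlib

open Filter Topology Metric Set

/-- `m` is a midpoint of `x` and `y`. -/
def IsMidpoint {X : Type*} [MetricSpace X] (x y m : X) : Prop :=
  dist x m = dist x y / 2 ∧ dist y m = dist x y / 2

/-- A CAT(0) space: a complete metric space with midpoints satisfying the
CN-inequality of Bruhat–Tits. -/
def IsCAT0 (X : Type*) [MetricSpace X] : Prop :=
  CompleteSpace X ∧
    (∀ x y : X, ∃ m : X, IsMidpoint x y m) ∧
    (∀ x y z m : X, IsMidpoint x y m →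
      dist z m ^ 2 ≤ dist z x ^ 2 / 2 + dist z y ^ 2 / 2 - dist x y ^ 2 / 4)

/-- `G` is a (compact) geodesic segment starting at `x`: the image of an
isometric embedding of a compact interval `[0, L]` whose left endpoint is
mapped to `x`. -/
def IsGeodesicSegmentFrom {X : Type*} [MetricSpace X] (x : X) (G : Set X) : Prop :=
  ∃ (L : ℝ) (γ : ℝ → X), 0 ≤ L ∧ γ 0 = x ∧
    (∀ s ∈ Icc (0:ℝ) L, ∀ t ∈ Icc (0:ℝ) L, dist (γ s) (γ t) = |s - t|) ∧
    G = γ '' Icc (0:ℝ) L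

/-- `G` is a geodesic segment from `x` to `y`. -/
def IsGeodesicSegmentBetween {X : Type*} [MetricSpace X] (x y : X) (G : Set X) : Prop :=
  ∃ γ : ℝ → X, γ 0 = x ∧ γ (dist x y) = y ∧
    (∀ s ∈ Icc (0:ℝ) (dist x y), ∀ t ∈ Icc (0:ℝ) (dist x y),
      dist (γ s) (γ t) = |s - t|) ∧
    G = γ '' Icc (0:ℝ) (dist x y)

/-- `p` is a nearest point of `C` to `z` (a closest-point projection of `z`
onto `C`). -/
def IsNearestPoint {X : Type*} [MetricSpace X] (z : X) (C : Set X) (p : X) : Prop :=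
  p ∈ C ∧ ∀ q ∈ C, dist z p ≤ dist z q

/-- Weak (Δ-)convergence of a net `u` (indexed by a preordered set) to `x`:
for every geodesic segment `G` starting at `x`, the closest-point projections
of the `u i` onto `G` converge to `x` in the metric. -/
def WeakConv {X : Type*} [MetricSpace X] {I : Type*} [Preorder I]
    (u : I → X) (x : X) : Prop :=
  ∀ G : Set X, IsGeodesicSegmentFrom x G →
    ∀ p : I → X, (∀ i, IsNearestPoint (u i) G (p i)) → Tendsto p atTop (𝓝 x)

/-- The sets that are closed in the weak topology `T_Δ`: sets containing all
weak limits of bounded sequences of their elements. -/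
def TdeltaClosed {X : Type*} [MetricSpace X] (A : Set X) : Prop :=
  ∀ u : ℕ → X, (∀ n, u n ∈ A) → Bornology.IsBounded (Set.range u) →
    ∀ x : X, WeakConv u x → x ∈ A

/-- `T` is the weak topology `T_Δ`: its closed sets are exactly the weakly
sequentially closed sets. -/
def IsWeakTopology {X : Type*} [MetricSpace X] (T : TopologicalSpace X) : Prop :=
  ∀ A : Set X, @IsClosed X T A ↔ TdeltaClosed A

/-- Geodesic convexity of a subset of a metric space. -/
def GeodesicallyConvex {X : Type*} [MetricSpace X] (C : Set X) : Prop :=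
  ∀ x ∈ C, ∀ y ∈ C, ∀ G : Set X, IsGeodesicSegmentBetween x y G → G ⊆ C

/-- The coconvex topology `T_co`: the coarsest topology on `X` in which every
metrically closed, (geodesically) convex set is closed. -/
def coconvexTopology (X : Type*) [MetricSpace X] : TopologicalSpace X :=
  TopologicalSpace.generateFrom
    {U : Set X | ∃ C : Set X, IsClosed C ∧ GeodesicallyConvex C ∧ U = Cᶜ}

/-!
Compactness is tested on ultrafilters. If an ultrafilter `F` contains the bounded set `A`, the
limits `ρ y = lim_F dist z y` exist, and the CN inequality passes to `ρ ^ 2`, so `ρ` has a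
minimizer `x`, the asymptotic center of `F`. Every `T_Δ`-closed `B ∈ F` contains `x`: choosing
points of `B` diagonally gives a bounded sequence `u` with `dist (u n) y → ρ y` for all `y` in a
closed midpoint-convex set `C` containing `x` and `u`. If the projections of `u n` onto a
geodesic segment from `x` cluster at `q`, and `q'` is the projection of `q` onto `C`, the
projection inequalities give `ρ q' ^ 2 ≤ ρ x ^ 2 - dist q x ^ 2`, so `q = x`: `u` converges weakly
to `x`. Hence every `T_Δ`-open neighbourhood of `x` belongs to `F`.
-/

section CAT0

variable {X : Type*} [MetricSpace X]

def CNInequality (X : Type*) [MetricSpace X] : Prop :=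
  ∀ x y z m : X, IsMidpoint x y m →
    dist z m ^ 2 ≤ dist z x ^ 2 / 2 + dist z y ^ 2 / 2 - dist x y ^ 2 / 4

def MidpointConvex (C : Set X) : Prop :=
  ∀ a ∈ C, ∀ b ∈ C, ∃ m ∈ C, IsMidpoint a b m

theorem exists_isMinOn_of_midpoint_inequality [CompleteSpace X] {C : Set X} {f : X → ℝ}
    (hC : IsClosed C) (hne : C.Nonempty) (hCm : MidpointConvex C) (hf : ContinuousOn f C)
    (hbdd : BddBelow (f '' C))
    (hfm : ∀ a ∈ C, ∀ b ∈ C, ∀ m ∈ C, IsMidpoint a b m →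
      f m ≤ f a / 2 + f b / 2 - dist a b ^ 2 / 4) :
    ∃ p ∈ C, IsMinOn f C p := by
  set c := sInf (f '' C)
  have hc : ∀ y ∈ C, c ≤ f y := fun y hy => csInf_le hbdd (mem_image_of_mem f hy)
  have hdist : ∀ a ∈ C, ∀ b ∈ C, dist a b ^ 2 ≤ 2 * (f a - c) + 2 * (f b - c) := by
    intro a ha b hb
    obtain ⟨m, hmC, hm⟩ := hCm a ha b hb
    linarith [hfm a ha b hb m hmC hm, hc m hmC]
  obtain ⟨w, -, hw, hwC⟩ := exists_seq_tendsto_sInf (hne.image f) hbdd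
  choose v hvC hfv using hwC
  rw [← funext hfv] at hw
  have hcauchy : CauchySeq v := by
    refine Metric.cauchySeq_iff'.2 fun ε hε => ?_
    obtain ⟨N, hN⟩ := eventually_atTop.1 (hw.eventually (gt_mem_nhds (lt_add_of_pos_right c
      (by positivity : 0 < ε ^ 2 / 4))))
    refine ⟨N, fun n hn => ?_⟩
    have := hdist _ (hvC n) _ (hvC N)
    nlinarith [hN n hn, hN N le_rfl, dist_nonneg (x := v n) (y := v N)]
  obtain ⟨p, hvp⟩ := cauchySeq_tendsto_of_complete hcauchy
  have hpC : p ∈ C := hC.mem_of_tendsto hvp (Eventually.of_forall hvC)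
  have hfp : Tendsto (f ∘ v) atTop (𝓝 (f p)) :=
    (hf p hpC).tendsto.comp (tendsto_nhdsWithin_iff.2 ⟨hvp, Eventually.of_forall hvC⟩)
  refine ⟨p, hpC, fun y hy => ?_⟩
  rw [tendsto_nhds_unique hfp hw]
  exact hc y hy

theorem exists_isNearestPoint [CompleteSpace X] (hCN : CNInequality X) {C : Set X}
    (hC : IsClosed C) (hne : C.Nonempty) (hCm : MidpointConvex C) (z : X) :
    ∃ p, IsNearestPoint z C p := by
  obtain ⟨p, hpC, hp⟩ := exists_isMinOn_of_midpoint_inequality (f := fun y => dist z y ^ 2) hC hne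
    hCm (by fun_prop) ⟨0, by rintro _ ⟨y, -, rfl⟩; exact sq_nonneg _⟩
    fun a _ b _ m _ hm => hCN a b z m hm
  exact ⟨p, hpC, fun q hq => (pow_le_pow_iff_left₀ dist_nonneg dist_nonneg two_ne_zero).1 (hp hq)⟩

/-- Proved by halving the way from `p` to `y` `k` times and letting `k → ∞`. -/
theorem IsNearestPoint.dist_sq_add_dist_sq_le (hCN : CNInequality X) {C : Set X}
    (hCm : MidpointConvex C) {z p : X} (hp : IsNearestPoint z C p) {y : X} (hy : y ∈ C) :
    dist z p ^ 2 + dist p y ^ 2 ≤ dist z y ^ 2 := by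
  have key : ∀ k : ℕ, ∀ y ∈ C, dist z p ^ 2 + (1 - 2⁻¹ ^ k) * dist p y ^ 2 ≤ dist z y ^ 2 := by
    intro k
    induction k with
    | zero =>
      intro y hy
      simpa using pow_le_pow_left₀ dist_nonneg (hp.2 y hy) 2
    | succ k ih =>
      intro y hy
      obtain ⟨m, hmC, hm⟩ := hCm p hp.1 y hy
      have hcn := hCN p y z m hm
      have hih := ih m hmC
      rw [hm.1] at hih
      rw [pow_succ (2⁻¹ : ℝ) k]
      linarith
  have hlim : Tendsto (fun k : ℕ => dist z p ^ 2 + (1 - 2⁻¹ ^ k) * dist p y ^ 2) atTop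
      (𝓝 (dist z p ^ 2 + (1 - 0) * dist p y ^ 2)) :=
    ((tendsto_pow_atTop_nhds_zero_of_lt_one (by norm_num) (by norm_num)).const_sub 1
      |>.mul_const _).const_add _
  simpa using le_of_tendsto' hlim fun k => key k y hy

theorem tendsto_of_isMidpoint (hCN : CNInequality X) {ι : Type*} {l : Filter ι}
    {a b m : X} {a' b' m' : ι → X} (hm : IsMidpoint a b m)
    (hm' : ∀ i, IsMidpoint (a' i) (b' i) (m' i))
    (ha : Tendsto a' l (𝓝 a)) (hb : Tendsto b' l (𝓝 b)) : Tendsto m' l (𝓝 m) := by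
  have hbound : Tendsto (fun i => dist m (a' i) ^ 2 / 2 + dist m (b' i) ^ 2 / 2 -
      dist (a' i) (b' i) ^ 2 / 4) l (𝓝 0) := by
    have := ((((tendsto_const_nhds (x := m)).dist ha).pow 2).div_const 2).add
      ((((tendsto_const_nhds (x := m)).dist hb).pow 2).div_const 2)
      |>.sub ((ha.dist hb).pow 2 |>.div_const 4)
    rw [dist_comm m a, dist_comm m b, hm.1, hm.2] at this
    convert this using 2
    ring
  have hsq : Tendsto (fun i => dist (m' i) m ^ 2) l (𝓝 0) :=
    squeeze_zero (fun i => sq_nonneg _)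
      (fun i => by rw [dist_comm]; exact hCN _ _ m _ (hm' i)) hbound
  rw [tendsto_iff_dist_tendsto_zero]
  simpa [Real.sqrt_sq dist_nonneg] using hsq.sqrt

theorem MidpointConvex.closure (hCN : CNInequality X) (hmid : ∀ a b : X, ∃ m, IsMidpoint a b m)
    {D : Set X} (hD : MidpointConvex D) : MidpointConvex (closure D) := by
  intro a ha b hb
  obtain ⟨a', ha'D, ha'⟩ := mem_closure_iff_seq_limit.1 ha
  obtain ⟨b', hb'D, hb'⟩ := mem_closure_iff_seq_limit.1 hb
  choose m' hm'D hm' using fun n => hD _ (ha'D n) _ (hb'D n)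
  obtain ⟨m, hm⟩ := hmid a b
  exact ⟨m, mem_closure_of_tendsto (tendsto_of_isMidpoint hCN hm hm' ha' hb')
    (Eventually.of_forall hm'D), hm⟩

end CAT0

section Segment

variable {X : Type*} [MetricSpace X] {x : X} {G : Set X}

theorem IsGeodesicSegmentFrom.mem (hG : IsGeodesicSegmentFrom x G) : x ∈ G := by
  obtain ⟨L, γ, hL, hγ0, -, rfl⟩ := hG
  exact ⟨0, ⟨le_rfl, hL⟩, hγ0⟩

theorem IsGeodesicSegmentFrom.isCompact (hG : IsGeodesicSegmentFrom x G) : IsCompact G := by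
  obtain ⟨L, γ, -, -, hγ, rfl⟩ := hG
  have : LipschitzOnWith 1 γ (Icc 0 L) :=
    LipschitzOnWith.of_dist_le_mul fun s hs t ht => by simp [hγ s hs t ht, Real.dist_eq]
  exact isCompact_Icc.image_of_continuousOn this.continuousOn

theorem IsGeodesicSegmentFrom.midpointConvex (hG : IsGeodesicSegmentFrom x G) :
    MidpointConvex G := by
  obtain ⟨L, γ, -, -, hγ, rfl⟩ := hG
  rintro _ ⟨s, hs, rfl⟩ _ ⟨t, ht, rfl⟩
  have hst : (s + t) / 2 ∈ Icc 0 L := ⟨by linarith [hs.1, ht.1], by linarith [hs.2, ht.2]⟩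
  refine ⟨γ ((s + t) / 2), mem_image_of_mem γ hst, ?_, ?_⟩
  · rw [hγ _ hs _ ht, hγ _ hs _ hst, show s - (s + t) / 2 = (s - t) / 2 by ring, abs_div, abs_two]
  · rw [hγ _ hs _ ht, hγ _ ht _ hst, show t - (s + t) / 2 = -((s - t) / 2) by ring, abs_neg,
      abs_div, abs_two]

end Segment

theorem weakConv_of_tendsto_dist {X : Type*} [MetricSpace X] [CompleteSpace X]
    (hCN : CNInequality X) {u : ℕ → X} {x : X} {C : Set X} {ρ : X → ℝ}
    (hC : IsClosed C) (hCm : MidpointConvex C) (huC : ∀ n, u n ∈ C)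
    (hux : Tendsto (fun n => dist (u n) x) atTop (𝓝 (ρ x)))
    (huy : ∀ y ∈ C, Tendsto (fun n => dist (u n) y) atTop (𝓝 (ρ y)))
    (hmin : ∀ y ∈ C, ρ x ≤ ρ y) : WeakConv u x := by
  intro G hG p hp
  refine hG.isCompact.tendsto_nhds_of_unique_mapClusterPt (Eventually.of_forall fun n => (hp n).1)
    fun q _ hq => ?_
  obtain ⟨ψ, hψ, hpq⟩ := hq.tendsto_subseq
  obtain ⟨q', hq'⟩ := exists_isNearestPoint hCN hC ⟨u 0, huC 0⟩ hCm q
  have key : ∀ n, dist (u n) q' ^ 2 ≤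
      dist (u n) x ^ 2 - dist (p n) x ^ 2 + dist (p n) q * (2 * dist (u n) x + dist (p n) q) := by
    intro n
    have hC' := hq'.dist_sq_add_dist_sq_le hCN hCm (huC n)
    have hG' := (hp n).dist_sq_add_dist_sq_le hCN hG.midpointConvex hG.mem
    have hpx := (hp n).2 x hG.mem
    have htri := dist_triangle (u n) (p n) q
    rw [dist_comm q (u n), dist_comm q' (u n)] at hC'
    nlinarith [pow_le_pow_left₀ dist_nonneg htri 2, sq_nonneg (dist q q'),
      mul_le_mul_of_nonneg_right hpx (dist_nonneg (x := p n) (y := q))]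
  have hlim : ρ q' ^ 2 ≤ ρ x ^ 2 - dist q x ^ 2 + dist q q * (2 * ρ x + dist q q) := by
    have hux' := hux.comp hψ.tendsto_atTop
    have hpq' : Tendsto (fun n => dist (p (ψ n)) q) atTop (𝓝 (dist q q)) :=
      hpq.dist tendsto_const_nhds
    refine le_of_tendsto_of_tendsto' (((huy q' hq'.1).comp hψ.tendsto_atTop).pow 2)
      (((hux'.pow 2).sub ((hpq.dist tendsto_const_nhds).pow 2)).add
        (hpq'.mul ((hux'.const_mul 2).add hpq'))) fun n => key (ψ n)
  have hρx : 0 ≤ ρ x := ge_of_tendsto' hux fun n => dist_nonneg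
  have hxq' := hmin q' hq'.1
  rw [dist_self, zero_mul, add_zero] at hlim
  exact dist_le_zero.1 (by nlinarith [dist_nonneg (x := q) (y := x)])

section AsymptoticCenter

variable {X : Type*} [MetricSpace X]

theorem Ultrafilter.exists_tendsto_dist (F : Ultrafilter X) {A : Set X}
    (hA : Bornology.IsBounded A) (hAF : A ∈ F) :
    ∃ ρ : X → ℝ, ∀ y, Tendsto (fun z => dist z y) F (𝓝 (ρ y)) := by
  have hlim (y : X) := ((LipschitzWith.dist_left y).isBounded_image hA).isCompact_closure
    |>.ultrafilter_le_nhds (F.map fun z => dist z y) (le_principal_iff.2 (mem_map.2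
      (mem_of_superset hAF fun z hz => subset_closure (mem_image_of_mem _ hz))))
  exact ⟨fun y => (hlim y).choose, fun y => (hlim y).choose_spec.2⟩

theorem lipschitzWith_one_of_tendsto_dist {F : Filter X} [F.NeBot] {ρ : X → ℝ}
    (hρ : ∀ y, Tendsto (fun z => dist z y) F (𝓝 (ρ y))) : LipschitzWith 1 ρ :=
  LipschitzWith.of_dist_le_mul fun y y' => by
    simpa using le_of_tendsto' ((hρ y).dist (hρ y')) fun z => dist_dist_dist_le_right z y y'

/-- `ρ` is the asymptotic radius of `F` and `x` its asymptotic center. The CN inequality passes to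
the limit `ρ ^ 2`, which therefore attains its minimum. -/
theorem exists_asymptoticCenter [CompleteSpace X] [Nonempty X] (hCN : CNInequality X)
    (hmid : ∀ a b : X, ∃ m, IsMidpoint a b m) {F : Filter X} [F.NeBot] {ρ : X → ℝ}
    (hρ : ∀ y, Tendsto (fun z => dist z y) F (𝓝 (ρ y))) : ∃ x, ∀ y, ρ x ≤ ρ y := by
  have hρ0 : ∀ y, 0 ≤ ρ y := fun y => ge_of_tendsto' (hρ y) fun z => dist_nonneg
  have hCNρ : ∀ a b m, IsMidpoint a b m → ρ m ^ 2 ≤ ρ a ^ 2 / 2 + ρ b ^ 2 / 2 - dist a b ^ 2 / 4 :=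
    fun a b m hm => le_of_tendsto_of_tendsto' ((hρ m).pow 2)
      ((((hρ a).pow 2).div_const 2).add (((hρ b).pow 2).div_const 2) |>.sub tendsto_const_nhds)
      fun z => hCN a b z m hm
  obtain ⟨x, -, hx⟩ := exists_isMinOn_of_midpoint_inequality (f := fun y => ρ y ^ 2) isClosed_univ
    univ_nonempty (fun a _ b _ => (hmid a b).imp fun m hm => ⟨mem_univ m, hm⟩)
    ((lipschitzWith_one_of_tendsto_dist hρ).continuous.pow 2).continuousOn
    ⟨0, by rintro _ ⟨y, -, rfl⟩; exact sq_nonneg _⟩ fun a _ b _ m _ => hCNρ a b m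
  exact ⟨x, fun y => (pow_le_pow_iff_left₀ (hρ0 x) (hρ0 y) two_ne_zero).1 (hx (mem_univ y))⟩

end AsymptoticCenter

section TestSequence

variable {α : Type*}

theorem exists_seq_forall_mem_of_eqOn [Nonempty α] (S : ℕ → (ℕ → α) → Set α)
    (hS : ∀ n g, (S n g).Nonempty) (hdep : ∀ n g g', EqOn g g' (Iio n) → S n g = S n g') :
    ∃ u : ℕ → α, ∀ n, u n ∈ S n u := by
  choose pick hpick using hS
  let G : ℕ → ℕ → α := fun n =>
    Nat.rec (fun _ => Classical.arbitrary α) (fun k g => Function.update g k (pick k g)) n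
  have hG : ∀ n, EqOn (G n) (fun k => G (k + 1) k) (Iio n) := by
    intro n
    induction n with
    | zero => intro i hi; exact absurd hi (Nat.not_lt_zero i)
    | succ n ih =>
      intro i hi
      rcases Nat.lt_succ_iff_lt_or_eq.1 hi with hi | rfl
      · exact (Function.update_of_ne hi.ne _ _).trans (ih hi)
      · rfl
  refine ⟨fun n => G (n + 1) n, fun n => ?_⟩
  rw [← hdep n _ _ (hG n)]
  show Function.update (G n) n (pick n (G n)) n ∈ S n (G n)
  rw [Function.update_self]
  exact hpick n (G n)

def binaryClosureStep (op : α → α → α) (s : Set α) : Set α := s ∪ image2 op s s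

theorem binaryClosureStep_mono (op : α → α → α) : Monotone (binaryClosureStep op) :=
  fun _ _ h => union_subset_union h (image2_subset h h)

theorem subset_binaryClosureStep (op : α → α → α) (s : Set α) : s ⊆ binaryClosureStep op s :=
  subset_union_left

theorem Set.Finite.iterate_binaryClosureStep (op : α → α → α) {s : Set α} (hs : s.Finite)
    (n : ℕ) : ((binaryClosureStep op)^[n] s).Finite := by
  induction n with
  | zero => exact hs
  | succ n ih => rw [Function.iterate_succ_apply']; exact ih.union (ih.image2 op ih)

end TestSequence

/-- At step `n` only the finitely many points produced by `n` rounds of `op` from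
`x, u 0, …, u (n-1)` are tested, so that the constraint on `u n` is an `F`-large set. -/
theorem exists_seq_tendsto_dist {X : Type*} [MetricSpace X] {F : Filter X} [F.NeBot]
    {ρ : X → ℝ} (hρ : ∀ y, Tendsto (fun z => dist z y) F (𝓝 (ρ y))) (op : X → X → X)
    {B : Set X} (hB : B ∈ F) (x : X) :
    ∃ (u : ℕ → X) (D : Set X), (∀ n, u n ∈ B) ∧ x ∈ D ∧ (∀ n, u n ∈ D) ∧
      (∀ a ∈ D, ∀ b ∈ D, op a b ∈ D) ∧
      ∀ y ∈ D, Tendsto (fun n => dist (u n) y) atTop (𝓝 (ρ y)) := by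
  let E : ℕ → (ℕ → X) → Set X := fun n g =>
    (binaryClosureStep op)^[n] (insert x (g '' Iio n))
  have hYmono (g : ℕ → X) (k : ℕ) {n m : ℕ} (hnm : n ≤ m) :
      (binaryClosureStep op)^[k] (insert x (g '' Iio n)) ⊆
        (binaryClosureStep op)^[k] (insert x (g '' Iio m)) :=
    (binaryClosureStep_mono op).iterate k
      (insert_subset_insert (image_mono (Iio_subset_Iio hnm)))
  have hEmono (g : ℕ → X) : Monotone fun n => E n g := fun n m hnm =>
    (hYmono g n hnm).trans ((binaryClosureStep_mono op).monotone_iterate_of_le_map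
        (subset_binaryClosureStep op _) hnm)
  have hY (g : ℕ → X) (n : ℕ) : insert x (g '' Iio n) ⊆ E n g :=
    (binaryClosureStep_mono op).monotone_iterate_of_le_map (subset_binaryClosureStep op _)
      (Nat.zero_le n)
  have hF (n : ℕ) (g : ℕ → X) :
      ∀ᶠ z in F, z ∈ B ∧ ∀ y ∈ E n g, dist (dist z y) (ρ y) < 1 / (n + 1) :=
    (eventually_mem_set.2 hB).and <|
      (((finite_Iio n).image g).insert x |>.iterate_binaryClosureStep op n).eventually_all.2
        fun y _ => Metric.tendsto_nhds.1 (hρ y) _ Nat.one_div_pos_of_nat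
  have : Nonempty X := ⟨x⟩
  obtain ⟨u, hu⟩ := exists_seq_forall_mem_of_eqOn
    (fun n g => {z | z ∈ B ∧ ∀ y ∈ E n g, dist (dist z y) (ρ y) < 1 / (n + 1)})
    (fun n g => (hF n g).exists) fun n g g' h => by simp only [E, h.image_eq]
  refine ⟨u, ⋃ n, E n u, fun n => (hu n).1, mem_iUnion.2 ⟨0, hY u 0 (mem_insert x _)⟩,
    fun n => mem_iUnion.2 ⟨n + 1, hY u _ (mem_insert_of_mem x ⟨n, Nat.lt_succ_self n, rfl⟩)⟩,
    ?_, ?_⟩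
  · simp only [mem_iUnion]
    rintro a ⟨i, ha⟩ b ⟨j, hb⟩
    refine ⟨max i j + 1, hYmono u _ (Nat.le_succ _) ?_⟩
    rw [Function.iterate_succ_apply']
    exact subset_union_right (mem_image2_of_mem (hEmono u (le_max_left i j) ha)
      (hEmono u (le_max_right i j) hb))
  · simp only [mem_iUnion]
    rintro y ⟨k, hy⟩
    exact tendsto_iff_dist_tendsto_zero.2 (squeeze_zero' (Eventually.of_forall fun n => dist_nonneg)
      (eventually_atTop.2 ⟨k, fun n hn => ((hu n).2 y (hEmono u hn hy)).le⟩)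
      tendsto_one_div_add_atTop_nhds_zero_nat)

theorem TdeltaClosed.asymptoticCenter_mem {X : Type*} [MetricSpace X] [CompleteSpace X]
    (hCN : CNInequality X) (hmid : ∀ a b : X, ∃ m, IsMidpoint a b m) {F : Filter X} [F.NeBot]
    {ρ : X → ℝ} (hρ : ∀ y, Tendsto (fun z => dist z y) F (𝓝 (ρ y))) {x : X}
    (hx : ∀ y, ρ x ≤ ρ y) {B : Set X} (hB : TdeltaClosed B) (hBF : B ∈ F) : x ∈ B := by
  choose mid hmid using hmid
  obtain ⟨u, D, huB, hxD, huD, hDmid, hDρ⟩ := exists_seq_tendsto_dist hρ mid hBF x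
  have hD : MidpointConvex D := fun a ha b hb => ⟨mid a b, hDmid a ha b hb, hmid a b⟩
  have hclosure : closure D ⊆ {y | Tendsto (fun n => dist (u n) y) atTop (𝓝 (ρ y))} :=
    closure_minimal hDρ <|
      (LipschitzWith.uniformEquicontinuous _ 1 fun n => LipschitzWith.dist_right (u n))
        |>.equicontinuous.isClosed_setOfPred_tendsto
          (lipschitzWith_one_of_tendsto_dist hρ).continuous
  have hux := hDρ x hxD
  obtain ⟨R, hR⟩ := hux.bddAbove_range
  refine hB u huB ((isBounded_iff_subset_closedBall x).2 ⟨R, ?_⟩) x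
    (weakConv_of_tendsto_dist hCN isClosed_closure (hD.closure hCN fun a b => ⟨mid a b, hmid a b⟩)
      (fun n => subset_closure (huD n)) hux hclosure fun y _ => hx y)
  rintro _ ⟨n, rfl⟩
  exact hR ⟨n, rfl⟩

/-- Every bounded `T_Δ`-closed subset of a CAT(0) space is
`T_Δ`-compact. -/
theorem bounded_weakly_closed_is_compact
    (X : Type*) [MetricSpace X] (hX : IsCAT0 X)
    (TΔ : TopologicalSpace X) (hTΔ : IsWeakTopology TΔ)
    (A : Set X) (hAb : Bornology.IsBounded A) (hAcl : @IsClosed X TΔ A) :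
    @IsCompact X TΔ A := by
  obtain ⟨_, hmid, hCN⟩ := hX
  refine (@isCompact_iff_ultrafilter_le_nhds X TΔ A).2 fun F hFA => ?_
  have hAF : A ∈ F := le_principal_iff.1 hFA
  have : Nonempty X := ⟨(F.nonempty_of_mem hAF).some⟩
  obtain ⟨ρ, hρ⟩ := F.exists_tendsto_dist hAb hAF
  obtain ⟨x, hx⟩ := exists_asymptoticCenter hCN hmid hρ
  have hmem (B : Set X) (hB : @IsClosed X TΔ B) (hBF : B ∈ F) : x ∈ B :=
    ((hTΔ B).1 hB).asymptoticCenter_mem hCN hmid hρ hx hBF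
  refine ⟨x, hmem A hAcl hAF, (@le_nhds_iff X TΔ x F).2 fun s hxs hs => ?_⟩
  by_contra hsF
  exact hmem sᶜ (@IsOpen.isClosed_compl X TΔ s hs) (F.compl_mem_iff_notMem.2 hsF) hxs
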